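/- arXiv:1802.01814 — 11 statements merged into one kernel-verified Lean document; each statement's English description precedes it below -/
import Mathlib

section
/- For λ, μ ∈ ℂ*, α ∈ ℂ, and any f ∈ ℂ[t] and integers i, j, k, l, the operators L_{i,j} acting on ℂ[t] by (L_{i,j}·f)(t) = λ^{i-j} μ^j (t - iα) f(t - i) satisfy the commutation relation L_{i,j}·(L_{k,l}·f) - L_{k,l}·(L_{i,j}·f) = (k - i) L_{i+k, j+l}·f. -/
open Polynomial

/-- Loop-Virasoro action `L_{i,j}·f = λ^{i-j} μ^j (t - iα) f(t - i)` satisfies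
`[L_{i,j}, L_{k,l}] = (k - i) L_{i+k, j+l}` on `ℂ[t]`. -/
theorem stmt0 (lam mu : ℂ) (hlam : lam ≠ 0) (hmu : mu ≠ 0) (α : ℂ)
    (L : ℤ → ℤ → ℂ[X] → ℂ[X])
    (hL : ∀ (i j : ℤ) (f : ℂ[X]),
      L i j f = C (lam ^ (i - j) * mu ^ j) * (X - C ((i : ℂ) * α)) * f.comp (X - C (i : ℂ)))
    (f : ℂ[X]) (i j k l : ℤ) :
    L i j (L k l f) - L k l (L i j f) = C ((k : ℂ) - (i : ℂ)) * L (i + k) (j + l) f := by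
  have hpow : lam ^ (i + k - (j + l)) = lam ^ (i - j) * lam ^ (k - l) := by
    rw [← zpow_add₀ hlam]; ring_nf
  have hmupow : mu ^ (j + l) = mu ^ j * mu ^ l := zpow_add₀ hmu j l
  have hcomp : ∀ (g : ℂ[X]) (a b : ℂ),
      (g.comp (X - C a)).comp (X - C b) = g.comp (X - C (a + b)) := by
    intro g a b
    rw [comp_assoc]
    congr 1
    simp [sub_comp]
    ring
  simp only [hL, mul_comp, sub_comp, X_comp, C_comp, hcomp]
  push_cast
  rw [hpow, hmupow]
  simp only [map_mul, map_add, map_sub, map_neg]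
  push_cast
  ring
end

section
/- For λ ∈ ℂ*, α ∈ ℂ, and any f ∈ ℂ[t] and integers i, j, the operators L_i acting on ℂ[t] by (L_i·f)(t) = λ^i (t - iα) f(t - i) satisfy L_i·(L_j·f) - L_j·(L_i·f) = (j - i) L_{i+j}·f, i.e., this action defines a representation of the centerless Virasoro (Witt) algebra on ℂ[t]. -/
/-!
Since the shifts `t ↦ t - i` compose additively, both `L_i L_j f` and `L_j L_i f` are
`λ^{i+j} f(t - i - j)` times a quadratic prefactor, `(t - iα)(t - i - jα)` resp.
`(t - jα)(t - j - iα)`, and these differ by exactly `(j - i)(t - (i + j)α)`.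
-/

open Polynomial

namespace Polynomial

theorem comp_X_sub_C_comp_X_sub_C {R : Type*} [CommRing R] (f : R[X]) (a b : R) :
    (f.comp (X - C a)).comp (X - C b) = f.comp (X - C (a + b)) := by
  rw [comp_assoc, sub_comp, X_comp, C_comp, C_add, sub_sub, add_comm]

variable {K : Type*} [Field K]

/-- The operator `L_i` of the module `Ω(λ, α)`, over an arbitrary field. -/
noncomputable def wittShift (lam α : K) (i : ℤ) (f : K[X]) : K[X] :=
  C (lam ^ i) * (X - C ((i : K) * α)) * f.comp (X - C (i : K))

theorem wittShift_wittShift {lam : K} (hlam : lam ≠ 0) (α : K) (i j : ℤ) (f : K[X]) :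
    wittShift lam α i (wittShift lam α j f) =
      C (lam ^ (i + j)) * (X - C ((i : K) * α)) * (X - C (i : K) - C ((j : K) * α)) *
        f.comp (X - C ((i + j : ℤ) : K)) := by
  simp only [wittShift, mul_comp, sub_comp, C_comp, X_comp, comp_X_sub_C_comp_X_sub_C,
    zpow_add₀ hlam, C_mul, Int.cast_add, add_comm (i : K)]
  ring

theorem wittShift_commutator {lam : K} (hlam : lam ≠ 0) (α : K) (i j : ℤ) (f : K[X]) :
    wittShift lam α i (wittShift lam α j f) - wittShift lam α j (wittShift lam α i f) =
      C ((j : K) - (i : K)) * wittShift lam α (i + j) f := by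
  rw [wittShift_wittShift hlam, wittShift_wittShift hlam, wittShift, add_comm j i]
  simp only [C_sub, C_mul, C_add, Int.cast_add]
  ring

end Polynomial

/-- The action `L_i·f = λ^i (t - iα) f(t - i)` satisfies
`[L_i, L_j] = (j - i) L_{i+j}` on `ℂ[t]` (Witt algebra representation). -/
theorem stmt1 (lam : ℂ) (hlam : lam ≠ 0) (α : ℂ)
    (L : ℤ → ℂ[X] → ℂ[X])
    (hL : ∀ (i : ℤ) (f : ℂ[X]),
      L i f = C (lam ^ i) * (X - C ((i : ℂ) * α)) * f.comp (X - C (i : ℂ)))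
    (f : ℂ[X]) (i j : ℤ) :
    L i (L j f) - L j (L i f) = C ((j : ℂ) - (i : ℂ)) * L (i + j) f := by
  obtain rfl : L = wittShift lam α := funext₂ hL
  exact wittShift_commutator hlam α i j f
end

section
/- Let α ∈ ℂ, i a nonzero integer, and F ∈ ℂ[t] a polynomial satisfying (t - iα) F(t - i) = (t - iα - i) F(t) as polynomials. Then there exists μ ∈ ℂ such that F(t) = μ (t - iα). -/
open Polynomial

/-- If `(t - iα) F(t - i) = (t - iα - i) F(t)` with `i ≠ 0`, then `F(t) = μ (t - iα)`. -/
theorem stmt2 (α : ℂ) (i : ℤ) (hi : i ≠ 0) (F : ℂ[X])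
    (h : (X - C ((i : ℂ) * α)) * F.comp (X - C (i : ℂ))
        = (X - C ((i : ℂ) * α + (i : ℂ))) * F) :
    ∃ μ : ℂ, F = C μ * (X - C ((i : ℂ) * α)) := by
  have hi' : (i : ℂ) ≠ 0 := Int.cast_ne_zero.mpr hi
  set c : ℂ := (i : ℂ) * α with hc
  -- F has root c
  have hroot : F.IsRoot c := by
    have := congrArg (eval c) h
    simp [eval_mul, eval_comp, hi'] at this
    simpa [IsRoot] using this
  obtain ⟨G, hG⟩ := dvd_iff_isRoot.mpr hroot
  -- key: G.comp (X - C i) = G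
  have hkey : G.comp (X - C (i:ℂ)) = G := by
    have hne : (X - C c) * (X - C (c + (i:ℂ))) ≠ 0 :=
      mul_ne_zero (X_sub_C_ne_zero c) (X_sub_C_ne_zero _)
    apply mul_left_cancel₀ hne
    rw [hG] at h
    have hcomp : ((X - C c) * G).comp (X - C (i:ℂ))
        = (X - C (c + (i:ℂ))) * G.comp (X - C (i:ℂ)) := by
      rw [mul_comp, sub_comp, X_comp, C_comp, C_add]
      ring
    rw [hcomp] at h
    linear_combination h
  -- G is constant
  have heval : ∀ x : ℂ, G.eval (x - (i:ℂ)) = G.eval x := by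
    intro x
    have := congrArg (eval x) hkey
    simpa [eval_comp] using this
  have hsteps : ∀ n : ℕ, G.eval ((n : ℂ) * (i:ℂ)) = G.eval 0 := by
    intro n
    induction n with
    | zero => simp
    | succ n ih =>
      have h2 : ((n + 1 : ℕ) : ℂ) * (i:ℂ) - (i:ℂ) = (n : ℂ) * (i:ℂ) := by
        push_cast; ring
      rw [← heval (((n + 1 : ℕ) : ℂ) * (i:ℂ)), h2]
      exact ih
  have hGz : G - C (G.eval 0) = 0 := by
    apply Polynomial.eq_zero_of_infinite_isRoot
    apply Set.Infinite.mono (s := Set.range (fun n : ℕ => (n : ℂ) * (i:ℂ)))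
    · rintro _ ⟨n, rfl⟩
      simp [IsRoot, hsteps n]
    · apply Set.infinite_range_of_injective
      intro a b hab
      have : (a : ℂ) = b := mul_right_cancel₀ hi' hab
      exact_mod_cast this
  obtain ⟨μ, hμ⟩ : ∃ μ, G = C μ := ⟨G.eval 0, sub_eq_zero.mp hGz⟩
  exact ⟨μ, by rw [hG, hμ, mul_comm]⟩
end

section
/- For λ, μ ∈ ℂ*, the linear map sending f(t) ∈ ℂ[t] to t·f(t) ∈ t·ℂ[t] is an isomorphism from the loop-Virasoro module Ω(λ, μ, 1) onto the submodule t·Ω(λ, μ, 0): for all integers i, j and f ∈ ℂ[t], one has t·(L^{(1)}_{i,j}·f) = L^{(0)}_{i,j}·(t·f), where L^{(α)}_{i,j}·f(t) = λ^{i-j} μ^j (t - iα) f(t - i). -/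
open Polynomial

/-- Multiplication by `t` intertwines `Ω(λ, μ, 1)` and the submodule `t·Ω(λ, μ, 0)`:
`t·(L^{(1)}_{i,j}·f) = L^{(0)}_{i,j}·(t·f)`. -/
theorem stmt9 (lam mu : ℂ) (hlam : lam ≠ 0) (hmu : mu ≠ 0)
    (L : ℂ → ℤ → ℤ → ℂ[X] → ℂ[X])
    (hL : ∀ (α : ℂ) (i j : ℤ) (f : ℂ[X]),
      L α i j f = C (lam ^ (i - j) * mu ^ j) * (X - C ((i : ℂ) * α)) * f.comp (X - C (i : ℂ)))
    (i j : ℤ) (f : ℂ[X]) :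
    X * L 1 i j f = L 0 i j (X * f) := by
  simp only [hL, mul_comp, X_comp, mul_one, mul_zero, C_0, sub_zero]
  ring
end

section
/- Let q ∈ ℂ* with q = -1/2, α ∈ ℂ, m a nonzero integer, and H ∈ ℂ[t] satisfy (t - (m/2)α) H(t - m/2) = (t - (m/2)α + m/2) H(t) as polynomials. Then H = 0. -/
/-!
Evaluating the identity at `x = a` kills the left side, so `a` is a root of `H`; evaluating at
`x = a + (k+1)c` then propagates roots along the arithmetic progression `a, a + c, a + 2c, …`,
since the factor `(k + 2)c` on the right never vanishes in characteristic zero. A polynomial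
with infinitely many roots is zero.
-/

open Polynomial

namespace Polynomial

variable {K : Type*} [Field K] [CharZero K]

theorem eval_add_natCast_mul_eq_zero_of_eval_sub_eq {H : K[X]} {a c : K} (hc : c ≠ 0)
    (hH : ∀ x, (x - a) * H.eval (x - c) = (x - (a - c)) * H.eval x) (k : ℕ) :
    H.eval (a + k * c) = 0 := by
  induction k with
  | zero =>
    have h := hH a
    rw [sub_self, zero_mul, sub_sub_cancel] at h
    simpa [hc] using h.symm
  | succ k ih =>
    have h := hH (a + (k + 1 : ℕ) * c)
    have hk : (k : K) + 2 ≠ 0 := by exact_mod_cast (by omega : k + 2 ≠ 0)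
    rw [show a + (k + 1 : ℕ) * c - c = a + k * c by push_cast; ring, ih, mul_zero,
      show a + (k + 1 : ℕ) * c - (a - c) = ((k : K) + 2) * c by push_cast; ring] at h
    simpa [hk, hc] using h.symm

theorem eq_zero_of_mul_comp_sub_eq {H : K[X]} {a c : K} (hc : c ≠ 0)
    (h : (X - C a) * H.comp (X - C c) = (X - C (a - c)) * H) : H = 0 := by
  have hH : ∀ x, (x - a) * H.eval (x - c) = (x - (a - c)) * H.eval x := fun x => by
    simpa [eval_comp] using congrArg (eval x) h
  refine eq_zero_of_infinite_isRoot H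
    (Set.infinite_of_injective_forall_mem (f := fun k : ℕ => a + k * c) ?_
      (eval_add_natCast_mul_eq_zero_of_eval_sub_eq hc hH))
  exact (add_right_injective a).comp ((mul_left_injective₀ hc).comp Nat.cast_injective)

end Polynomial

/-- If `(t - (m/2)α) H(t - m/2) = (t - (m/2)α + m/2) H(t)` with `m ≠ 0`, then `H = 0`. -/
theorem stmt11 (α : ℂ) (m : ℤ) (hm : m ≠ 0) (H : ℂ[X])
    (h : (X - C ((m : ℂ) / 2 * α)) * H.comp (X - C ((m : ℂ) / 2))
        = (X - C ((m : ℂ) / 2 * α - (m : ℂ) / 2)) * H) :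
    H = 0 :=
  eq_zero_of_mul_comp_sub_eq (div_ne_zero (Int.cast_ne_zero.mpr hm) two_ne_zero) h
end

section
/- Let q ∈ ℂ*, α ∈ ℂ, m a nonzero integer, and H ∈ ℂ[t] satisfy (t - mα + m) H(t) = (t - mα) H(t - m) as polynomials. Then H = 0. -/
open Polynomial

/-- If `(t - mα + m) H(t) = (t - mα) H(t - m)` with `m ≠ 0`, then `H = 0`. -/
theorem stmt12 (α : ℂ) (m : ℤ) (hm : m ≠ 0) (H : ℂ[X])
    (h : (X - C ((m : ℂ) * α - (m : ℂ))) * H = (X - C ((m : ℂ) * α)) * H.comp (X - C (m : ℂ))) :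
    H = 0 := by
  have hm' : (m : ℂ) ≠ 0 := Int.cast_ne_zero.mpr hm
  set p : ℕ → ℂ := fun k => (m : ℂ) * α - (k + 1) * m with hp
  have step : ∀ k : ℕ, (k : ℂ) * m * H.eval (p k) = ((k : ℂ) + 1) * m * H.eval (p (k + 1)) := by
    intro k
    have e := congrArg (eval (p k)) h
    simp only [eval_mul, eval_sub, eval_X, eval_C, eval_comp] at e
    have harg : p k - (m : ℂ) = p (k + 1) := by simp [hp]; push_cast; ring
    rw [harg] at e
    have hc1 : p k - ((m : ℂ) * α - m) = -(k : ℂ) * m := by simp [hp]; ring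
    have hc2 : p k - (m : ℂ) * α = (-(k : ℂ) - 1) * m := by simp [hp]; ring
    rw [hc1, hc2] at e
    linear_combination -e
  have key : ∀ k : ℕ, H.eval (p (k + 1)) = 0 := by
    intro k
    induction k with
    | zero =>
      have h0 := step 0
      push_cast at h0
      have : ((0 : ℂ) + 1) * (m : ℂ) * H.eval (p 1) = 0 := by rw [← h0]; ring
      have hne : ((0 : ℂ) + 1) * (m : ℂ) ≠ 0 := by simpa using hm'
      exact (mul_eq_zero.mp this).resolve_left hne
    | succ n ih =>
      have hs := step (n + 1)
      rw [ih] at hs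
      have hne : ((n + 1 : ℕ) : ℂ) + 1 ≠ 0 := by
        have : ((n + 1 : ℕ) : ℂ) + 1 = ((n + 2 : ℕ) : ℂ) := by push_cast; ring
        rw [this]
        exact_mod_cast Nat.succ_ne_zero (n + 1)
      have : (((n + 1 : ℕ) : ℂ) + 1) * (m : ℂ) * H.eval (p (n + 1 + 1)) = 0 := by
        rw [← hs]; ring
      exact (mul_eq_zero.mp this).resolve_left (mul_ne_zero hne hm')
  apply Polynomial.eq_zero_of_infinite_isRoot
  apply Set.infinite_of_injective_forall_mem (f := fun k : ℕ => p (k + 1))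
  · intro a b hab
    simp only [hp, sub_right_inj] at hab
    have h2 := mul_right_cancel₀ hm' hab
    push_cast at h2
    have h3 : (a : ℂ) = b := by linear_combination h2
    exact_mod_cast h3
  · intro k
    exact key k
end

section
/- Let q ∈ ℂ* with |1/q| ∉ ℕ (i.e., neither 1/q nor -1/q is a positive integer), and let H ∈ ℂ[t] be a polynomial of degree N with nonzero leading coefficient a_N satisfying, for every integer m, the identity m²(1+q)(1+2q)H(t) = (t² + mqt + m²q²α(1-α))(H(t+mq) - H(t)) + (t² - mqt + m²q²α(1-α))(H(t-mq) - H(t)) for some fixed α ∈ ℂ. Then N(N+1) = (1 + 1/q)(2 + 1/q); in particular, if |1/q| ∉ ℕ then no such nonzero H exists, i.e., H = 0. -/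
open Polynomial

/-- If `|1/q| ∉ ℕ` and `H` satisfies identity (3.4) of the paper for all `m ∈ ℤ`,
and `H` has degree `N` with nonzero leading coefficient `a_N`, then we reach a
contradiction; in particular no such nonzero `H` exists. -/
theorem stmt13 (q : ℂ) (hq : q ≠ 0)
    (hq1 : ∀ n : ℕ, 0 < n → (1 / q ≠ (n : ℂ) ∧ 1 / q ≠ -(n : ℂ)))
    (α : ℂ) (H : ℂ[X]) (N : ℕ) (aN : ℂ)
    (hdeg : H.natDegree = N) (hlead : H.coeff N = aN) (haN : aN ≠ 0)
    (h : ∀ m : ℤ,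
      C ((m : ℂ) ^ 2 * (1 + q) * (1 + 2 * q)) * H
        = (X ^ 2 + C ((m : ℂ) * q) * X + C ((m : ℂ) ^ 2 * q ^ 2 * α * (1 - α)))
            * (H.comp (X + C ((m : ℂ) * q)) - H)
          + (X ^ 2 - C ((m : ℂ) * q) * X + C ((m : ℂ) ^ 2 * q ^ 2 * α * (1 - α)))
            * (H.comp (X - C ((m : ℂ) * q)) - H)) :
    False := by
  have h1 := h 1
  push_cast at h1
  simp only [one_pow, one_mul] at h1
  set β : ℂ := q ^ 2 * α * (1 - α) with hβ
  -- Key step: compare coefficients of degree `N` on both sides to get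
  -- `(1+q)(1+2q) = q² N (N+1)`.
  have key : (1 + q) * (1 + 2 * q) = q ^ 2 * N * (N + 1) := by
    obtain _ | _ | M := N
    · -- `N = 0` : `H` is constant, RHS is `0`
      have hH : H = Polynomial.C aN := by
        rw [eq_C_of_natDegree_eq_zero hdeg, hlead]
      rw [hH] at h1
      simp only [C_comp, sub_self, mul_zero, add_zero, ← C_mul] at h1
      rw [C_eq_zero] at h1
      push_cast
      rcases mul_eq_zero.mp h1 with h2 | h2
      · rw [h2]; ring
      · exact absurd h2 haN
    · -- `N = 1` : `H` is linear
      have hH : H = C aN * X + C (H.coeff 0) := by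
        conv_lhs => rw [eq_X_add_C_of_natDegree_le_one (le_of_eq hdeg)]
        rw [hlead]
      set a0 := H.coeff 0
      rw [hH] at h1
      simp only [add_comp, mul_comp, C_comp, X_comp] at h1
      have h3 : C ((1 + q) * (1 + 2 * q)) * (C aN * X + C a0)
          = C (2 * aN * q * q) * X := by
        simp only [C_mul, map_ofNat] at h1 ⊢
        linear_combination h1
      have h4 := congrArg (fun p => p.coeff 1) h3
      simp only [coeff_C_mul, coeff_add, coeff_X_one, coeff_C, one_ne_zero, if_false,
        mul_one, mul_zero, add_zero] at h4
      push_cast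
      have hfin : (1 + q) * (1 + 2 * q) * aN = q ^ 2 * 1 * (1 + 1) * aN := by
        linear_combination h4
      exact mul_right_cancel₀ haN hfin
    · -- `N = M + 2` : use Hasse derivatives to compute the relevant coefficients
      have hdeg' : H.natDegree = M + 2 := hdeg
      have hlead' : H.coeff (M + 2) = aN := hlead
      have hzero : ∀ j : ℕ, M + 2 < j → H.coeff j = 0 := fun j hj =>
        coeff_eq_zero_of_natDegree_lt (by omega)
      have main : ∀ (r : ℂ) (k : ℕ), M ≤ k → (H.comp (X + C r)).coeff k
          = H.coeff k + (k + 1).choose k * H.coeff (k + 1) * r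
            + (k + 2).choose k * H.coeff (k + 2) * r ^ 2 := by
        intro r k hk
        rw [← taylor_apply, taylor_coeff]
        have hlt : (hasseDeriv k H).natDegree < 3 := by
          have := natDegree_hasseDeriv_le H k
          omega
        rw [eval_eq_sum_range' hlt, Finset.sum_range_succ, Finset.sum_range_succ,
          Finset.sum_range_one]
        simp only [hasseDeriv_coeff, zero_add, Nat.choose_self]
        rw [Nat.add_comm 1 k, Nat.add_comm 2 k]
        push_cast
        ring
      have hXB : (X : ℂ[X]) - C q = X + C (-q) := by rw [map_neg, sub_eq_add_neg]
      have eP : (X ^ 2 - C q * X + C β : ℂ[X]) = X ^ 2 + C (-q) * X + C β := by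
        rw [map_neg]; ring
      rw [hXB, eP] at h1
      have expand : ∀ (U : ℂ[X]) (s : ℂ), ((X ^ 2 + C s * X + C β) * U).coeff (M + 2)
          = U.coeff M + s * U.coeff (M + 1) + β * U.coeff (M + 2) := by
        intro U s
        have e : (X ^ 2 + C s * X + C β) * U = X ^ 2 * U + C s * (X * U) + C β * U := by
          ring
        have e1 : (X ^ 2 * U).coeff (M + 2) = U.coeff M := by
          rw [coeff_X_pow_mul']
          norm_num
        have e2 : (X * U).coeff (M + 2) = U.coeff (M + 1) := by
          rw [← pow_one (X : ℂ[X]), coeff_X_pow_mul']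
          norm_num
        rw [e, coeff_add, coeff_add, e1, coeff_C_mul, coeff_C_mul, e2]
      have h2 := congrArg (fun p => p.coeff (M + 2)) h1
      simp only [coeff_add] at h2
      rw [coeff_C_mul, expand, expand] at h2
      simp only [coeff_sub] at h2
      rw [main q M (by omega), main q (M + 1) (by omega), main q (M + 2) (by omega),
        main (-q) M (by omega), main (-q) (M + 1) (by omega),
        main (-q) (M + 2) (by omega)] at h2
      rw [show M + 1 + 1 = M + 2 by omega, show M + 1 + 2 = M + 3 by omega,
        show M + 2 + 1 = M + 3 by omega, show M + 2 + 2 = M + 4 by omega] at h2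
      rw [hzero (M + 3) (by omega), hzero (M + 4) (by omega), hlead'] at h2
      have c1 : (((M + 1).choose M : ℕ) : ℂ) = (M : ℂ) + 1 := by
        rw [Nat.choose_succ_self_right]; push_cast; ring
      have c2 : (((M + 2).choose (M + 1) : ℕ) : ℂ) = (M : ℂ) + 2 := by
        rw [show M + 2 = (M + 1) + 1 by omega, Nat.choose_succ_self_right]
        push_cast; ring
      have c3 : (((M + 2).choose M : ℕ) : ℂ) = ((M : ℂ) + 2) * ((M : ℂ) + 1) / 2 := by
        have cnat := Nat.choose_symm (show 2 ≤ M + 2 by omega)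
        rw [show M + 2 - 2 = M by omega] at cnat
        rw [cnat, Nat.cast_choose_two]
        push_cast; ring
      rw [c1, c2, c3] at h2
      have hfin : (1 + q) * (1 + 2 * q) * aN
          = q ^ 2 * (((M : ℂ) + 1 + 1)) * (((M : ℂ) + 1 + 1) + 1) * aN := by
        linear_combination h2
      have := mul_right_cancel₀ haN hfin
      push_cast
      linear_combination this
  -- Endgame: `(1 - (N-1)q)(1 + (N+2)q) = 0`, contradicting `hq1`.
  have hr : ((1 : ℂ) - ((N : ℂ) - 1) * q) * (1 + ((N : ℂ) + 2) * q) = 0 := by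
    linear_combination key
  rcases mul_eq_zero.mp hr with he | he
  · obtain _ | _ | K := N
    · refine (hq1 1 one_pos).2 ?_
      push_cast at he ⊢
      rw [div_eq_iff hq]
      linear_combination he
    · push_cast at he
      norm_num at he
    · refine (hq1 (K + 1) (by omega)).1 ?_
      push_cast at he ⊢
      rw [div_eq_iff hq]
      linear_combination he
  · refine (hq1 (N + 2) (by omega)).2 ?_
    push_cast at he ⊢
    rw [div_eq_iff hq]
    linear_combination he
end

section
/- For λ ∈ ℂ*, α, β ∈ ℂ, the action on ℂ[t] defined by L_{m,0}·f(t) = λ^m (t + mα) f(t + m), L_{m,1}·f(t) = λ^m β f(t + m), and L_{m,i}·f(t) = 0 for i ≥ 2, defines a representation of the centerless Block type Lie algebra B(-1): for all (m,i), (n,j) ∈ ℤ × ℤ≥0, L_{m,i}·(L_{n,j}·f) - L_{n,j}·(L_{m,i}·f) = (n(i-1) - m(j-1)) L_{m+n,i+j}·f. -/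
open Polynomial

/-- The action `L_{m,0}·f = λ^m (t + mα) f(t + m)`, `L_{m,1}·f = λ^m β f(t + m)`,
`L_{m,i}·f = 0` for `i ≥ 2`, defines a representation of the centerless Block
type Lie algebra `B(-1)`. -/
theorem stmt15 (lam : ℂ) (hlam : lam ≠ 0) (α β : ℂ)
    (L : ℤ → ℕ → ℂ[X] → ℂ[X])
    (hL0 : ∀ (m : ℤ) (f : ℂ[X]),
      L m 0 f = C (lam ^ m) * (X + C ((m : ℂ) * α)) * f.comp (X + C (m : ℂ)))
    (hL1 : ∀ (m : ℤ) (f : ℂ[X]),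
      L m 1 f = C (lam ^ m * β) * f.comp (X + C (m : ℂ)))
    (hL2 : ∀ (m : ℤ) (i : ℕ), 2 ≤ i → ∀ f : ℂ[X], L m i f = 0) :
    ∀ (m n : ℤ) (i j : ℕ) (f : ℂ[X]),
      L m i (L n j f) - L n j (L m i f)
        = C ((n : ℂ) * ((i : ℂ) - 1) - (m : ℂ) * ((j : ℂ) - 1)) * L (m + n) (i + j) f := by
  have hzero : ∀ (n : ℤ) (j : ℕ), L n j 0 = 0 := by
    intro n j
    match j with
    | 0 => simp [hL0]
    | 1 => simp [hL1]
    | (k+2) => exact hL2 n (k+2) (by omega) 0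
  have hcomp : ∀ (f : ℂ[X]) (a b : ℂ),
      (f.comp (X + C a)).comp (X + C b) = f.comp (X + C (a + b)) := by
    intro f a b
    rw [Polynomial.comp_assoc]
    congr 1
    simp [add_comp]
    ring
  intro m n i j f
  match i, j with
  | 0, 0 =>
    rw [hL0, hL0, hL0 m, hL0 n, hL0 (m+n)]
    simp only [mul_comp, add_comp, C_comp, X_comp, hcomp]
    push_cast
    rw [zpow_add₀ hlam, add_comm (n:ℂ) (m:ℂ)]
    simp only [map_mul, map_add, map_sub, map_one, map_zero, map_neg]
    ring
  | 0, 1 =>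
    rw [hL1, hL0, hL1 n, hL0 m, hL1 (m+n)]
    simp only [mul_comp, add_comp, C_comp, X_comp, hcomp]
    push_cast
    rw [zpow_add₀ hlam, add_comm (n:ℂ) (m:ℂ)]
    simp only [map_mul, map_add, map_sub, map_one, map_zero, map_neg]
    ring
  | 1, 0 =>
    rw [hL0, hL1, hL0 n, hL1 m, hL1 (m+n)]
    simp only [mul_comp, add_comp, C_comp, X_comp, hcomp]
    push_cast
    rw [zpow_add₀ hlam, add_comm (n:ℂ) (m:ℂ)]
    simp only [map_mul, map_add, map_sub, map_one, map_zero, map_neg]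
    ring
  | 1, 1 =>
    rw [hL1, hL1, hL1 n, hL1 m, hL2 (m+n) 2 le_rfl]
    simp only [mul_comp, add_comp, C_comp, X_comp, hcomp]
    rw [add_comm (n:ℂ) (m:ℂ)]
    ring
  | (k+2), j =>
    rw [hL2 m (k+2) (by omega), hL2 m (k+2) (by omega), hzero,
      hL2 (m+n) (k+2+j) (by omega), mul_zero, sub_zero]
  | i, (k+2) =>
    rw [hL2 n (k+2) (by omega), hL2 n (k+2) (by omega), hzero,
      hL2 (m+n) (i+(k+2)) (by omega), mul_zero, zero_sub, neg_eq_zero]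
end

section
/- Let q ∈ ℂ* with q ≠ -1, λ ∈ ℂ*, α ∈ ℂ. The action on ℂ[t] defined by L_{m,0}·f(t) = λ^m (t - mqα) f(t - mq) and L_{m,i}·f(t) = 0 for all i ≥ 1 defines a representation of the centerless Block type Lie algebra B(q): for all (m,i), (n,j) ∈ ℤ × ℤ≥0, L_{m,i}·(L_{n,j}·f) - L_{n,j}·(L_{m,i}·f) = (n(i+q) - m(j+q)) L_{m+n,i+j}·f. -/
open Polynomial

/-- For `q ≠ -1`, the action `L_{m,0}·f = λ^m (t - mqα) f(t - mq)`, `L_{m,i}·f = 0`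
for `i ≥ 1`, defines a representation of the centerless Block type Lie algebra `B(q)`. -/
theorem stmt16 (q : ℂ) (hq : q ≠ 0) (hq1 : q ≠ -1) (lam : ℂ) (hlam : lam ≠ 0) (α : ℂ)
    (L : ℤ → ℕ → ℂ[X] → ℂ[X])
    (hL0 : ∀ (m : ℤ) (f : ℂ[X]),
      L m 0 f = C (lam ^ m) * (X - C ((m : ℂ) * q * α)) * f.comp (X - C ((m : ℂ) * q)))
    (hL1 : ∀ (m : ℤ) (i : ℕ), 1 ≤ i → ∀ f : ℂ[X], L m i f = 0) :
    ∀ (m n : ℤ) (i j : ℕ) (f : ℂ[X]),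
      L m i (L n j f) - L n j (L m i f)
        = C ((n : ℂ) * ((i : ℂ) + q) - (m : ℂ) * ((j : ℂ) + q)) * L (m + n) (i + j) f := by
  intro m n i j f
  match i, j with
  | 0, 0 =>
    rw [hL0, hL0, hL0, hL0, hL0]
    apply Polynomial.funext
    intro x
    simp only [eval_mul, eval_sub, eval_add, eval_C, eval_X, eval_comp, zpow_add₀ hlam]
    push_cast
    have : x - ((m : ℂ) + n) * q = x - m * q - n * q := by ring
    have h2 : x - (n : ℂ) * q - (m : ℂ) * q = x - m * q - n * q := by ring
    rw [this, h2]
    set y := f.eval (x - (m : ℂ) * q - (n : ℂ) * q)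
    ring
  | 0, Nat.succ j =>
    rw [hL1 n _ (Nat.le_add_left 1 j), hL1 n _ (Nat.le_add_left 1 j),
      hL1 (m+n) _ (by omega), hL0]
    simp
  | Nat.succ i, 0 =>
    rw [hL1 m _ (Nat.le_add_left 1 i), hL1 m _ (Nat.le_add_left 1 i),
      hL1 (m+n) _ (by omega), hL0]
    simp
  | Nat.succ i, Nat.succ j =>
    rw [hL1 m _ (Nat.le_add_left 1 i), hL1 n _ (Nat.le_add_left 1 j),
      hL1 (m+n) _ (by omega)]
    simp
end

section
/- For λ ∈ ℂ* and α ∈ ℂ*, the Virasoro module Ω(λ, α) = ℂ[t] with action L_i·f(t) = λ^i (t - iα) f(t - i) is simple: every nonzero subspace of ℂ[t] invariant under all L_i (i ∈ ℤ) equals ℂ[t]. -/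
/-!
For `f ∈ p` nonzero of degree `n`, the elements `λ^k L_{-k} f = (t + kα) f(t + k)`, `k ∈ ℕ`, are
the values at `s = k` of a polynomial in `s` of degree `n + 1` with coefficients in `ℂ[t]`, whose
leading coefficient is the nonzero constant `α · lc f`. Its `(n + 1)`-st forward difference at `0`
is an integer combination of these values, and equals `(n + 1)!` times that leading coefficient,
so `1 ∈ p`. Since `L_0` is multiplication by `t`, `p` is then all of `ℂ[t]`.
-/

open Polynomial fwdDiff

namespace Polynomial

theorem leadingCoeff_mem_of_eval_natCast_mem {K R : Type*} [Field K] [CharZero K]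
    [CommRing R] [Algebra K R] {p : Submodule K R} {P : R[X]}
    (hP : ∀ k : ℕ, P.eval (k : R) ∈ p) : P.leadingCoeff ∈ p := by
  have hdiff : (P.natDegree.factorial : K) • P.leadingCoeff ∈ p := by
    have h := congr_fun P.fwdDiff_iter_degree_eq_factorial 0
    rw [fwdDiff_iter_eq_sum_shift] at h
    simp only [zero_add, nsmul_one, Pi.smul_apply, Pi.natCast_apply, smul_eq_mul] at h
    rw [Nat.cast_smul_eq_nsmul, nsmul_eq_mul, mul_comm, ← h]
    exact p.toAddSubgroup.sum_mem fun k _ ↦ p.toAddSubgroup.zsmul_mem (hP k) _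
  have hfac : (P.natDegree.factorial : K) ≠ 0 := Nat.cast_ne_zero.mpr (Nat.factorial_ne_zero _)
  simpa [smul_smul, hfac] using p.smul_mem (P.natDegree.factorial : K)⁻¹ hdiff

variable {R : Type*} [CommRing R]

/-- The polynomial `s ↦ (t + s α) f(t + s)`: the outer variable is `s`, the inner one `t`. -/
noncomputable def shiftFamily (α : R) (f : R[X]) : R[X][X] :=
  (C (C α) * X + C X) * (f.map C).comp (X + C X)

theorem eval_C_shiftFamily (α s : R) (f : R[X]) :
    (shiftFamily α f).eval (C s) = (X + C (s * α)) * f.comp (X + C s) := by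
  rw [shiftFamily, eval_mul, eval_comp, eval_map]
  simp only [eval_add, eval_mul, eval_C, eval_X, comp, map_mul]
  rw [add_comm X, add_comm X, mul_comm (C s)]

theorem leadingCoeff_shiftFamily [IsDomain R] {α : R} (hα : α ≠ 0) (f : R[X]) :
    (shiftFamily α f).leadingCoeff = C (α * f.leadingCoeff) := by
  have hlin : (C (C α) * X + C X : R[X][X]).leadingCoeff = C α :=
    leadingCoeff_linear (C_ne_zero.mpr hα)
  have hshift : (X + C X : R[X][X]).natDegree = 1 := natDegree_X_add_C _
  rw [shiftFamily, leadingCoeff_mul, hlin, leadingCoeff_comp (by rw [hshift]; exact one_ne_zero),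
    (monic_X_add_C _).leadingCoeff, one_pow, mul_one, leadingCoeff_map_of_injective C_injective,
    map_mul]

end Polynomial

namespace Submodule

variable {R : Type*} [CommRing R]

theorem mul_mem_of_X_mul_mem (p : Submodule R R[X]) (hX : ∀ g ∈ p, X * g ∈ p)
    (f : R[X]) {g : R[X]} (hg : g ∈ p) : f * g ∈ p := by
  induction f using Polynomial.induction_on with
  | C a => simpa only [smul_eq_C_mul] using p.smul_mem a hg
  | add f₁ f₂ h₁ h₂ => simpa only [add_mul] using p.add_mem h₁ h₂
  | monomial n a ih => simpa only [pow_succ, mul_comm, mul_left_comm, mul_assoc] using hX _ ih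

theorem eq_top_of_one_mem_of_X_mul_mem {p : Submodule R R[X]} (h1 : (1 : R[X]) ∈ p)
    (hX : ∀ g ∈ p, X * g ∈ p) : p = ⊤ :=
  eq_top_iff.mpr fun f _ ↦ by simpa using mul_mem_of_X_mul_mem p hX f h1

end Submodule

/-- For `λ ∈ ℂ*` and `α ≠ 0`, the Virasoro module `Ω(λ, α) = ℂ[t]` with action
`L_i·f = λ^i (t - iα) f(t - i)` is simple. -/
theorem stmt17 (lam α : ℂ) (hlam : lam ≠ 0) (hα : α ≠ 0)
    (L : ℤ → ℂ[X] → ℂ[X])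
    (hL : ∀ (i : ℤ) (f : ℂ[X]),
      L i f = C (lam ^ i) * (X - C ((i : ℂ) * α)) * f.comp (X - C (i : ℂ)))
    (p : Submodule ℂ ℂ[X]) (hinv : ∀ (i : ℤ) (f : ℂ[X]), f ∈ p → L i f ∈ p)
    (hne : p ≠ ⊥) :
    p = ⊤ := by
  obtain ⟨f, hfp, hf0⟩ := p.ne_bot_iff.mp hne
  have hfamily : ∀ k : ℕ, (shiftFamily α f).eval (k : ℂ[X]) ∈ p := fun k ↦ by
    have hk := p.smul_mem (lam ^ (k : ℤ)) (hinv (-k) f hfp)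
    rw [hL, smul_eq_C_mul, ← mul_assoc, ← mul_assoc, ← map_mul, ← zpow_add₀ hlam, add_neg_cancel,
      zpow_zero, map_one, one_mul] at hk
    rw [← map_natCast C, eval_C_shiftFamily]
    simpa [sub_eq_add_neg] using hk
  have hlead := leadingCoeff_mem_of_eval_natCast_mem hfamily
  rw [leadingCoeff_shiftFamily hα] at hlead
  have h1 : (1 : ℂ[X]) ∈ p := by
    have h := p.smul_mem (α * f.leadingCoeff)⁻¹ hlead
    rwa [smul_C, smul_eq_mul, inv_mul_cancel₀ (mul_ne_zero hα (leadingCoeff_ne_zero.mpr hf0)),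
      map_one] at h
  refine Submodule.eq_top_of_one_mem_of_X_mul_mem h1 fun g hg ↦ ?_
  simpa [hL] using hinv 0 g hg
end

section
/- For λ ∈ ℂ* and α = 0, the Virasoro module Ω(λ, 0) = ℂ[t] with action L_i·f(t) = λ^i t f(t - i) has exactly one nontrivial proper submodule, namely t·ℂ[t]; moreover the quotient ℂ[t]/(t·ℂ[t]) is the one-dimensional trivial module (all L_i act as zero on the quotient). -/
open Polynomial

private lemma diff_step18 (f : ℂ[X]) (hd : 1 ≤ f.natDegree) :
    f - taylor (-1) f ≠ 0 ∧ (f - taylor (-1) f).natDegree < f.natDegree := by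
  set d := f.natDegree with hdd
  have hf0 : f ≠ 0 := by
    intro h
    rw [h] at hdd
    simp at hdd
    omega
  have hlc : f.coeff d ≠ 0 := by
    rw [hdd]
    exact fun h => hf0 (leadingCoeff_eq_zero.mp h)
  have hcd : (taylor (-1 : ℂ) f).coeff d = f.coeff d := by
    rw [taylor_coeff]
    rw [eval_eq_sum_range' (n := 1)
      (lt_of_le_of_lt (natDegree_hasseDeriv_le f d) (by omega)) (-1)]
    simp [hasseDeriv_coeff]
  have hcd1 : (taylor (-1 : ℂ) f).coeff (d - 1) = f.coeff (d - 1) - d * f.coeff d := by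
    rw [taylor_coeff]
    rw [eval_eq_sum_range' (n := 2)
      (lt_of_le_of_lt (natDegree_hasseDeriv_le f (d - 1)) (by omega)) (-1)]
    rw [Finset.sum_range_succ, Finset.sum_range_one]
    rw [hasseDeriv_coeff, hasseDeriv_coeff]
    have h1 : 0 + (d - 1) = d - 1 := by omega
    have h2 : 1 + (d - 1) = d := by omega
    rw [h1, h2, Nat.choose_self]
    have h3 : d.choose (d - 1) = d := by
      have := Nat.choose_symm (n := d) (k := d - 1) (by omega)
      have h4 : d - (d - 1) = 1 := by omega
      rw [h4, Nat.choose_one_right] at this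
      omega
    rw [h3]
    push_cast
    ring
  set g := f - taylor (-1) f with hg
  have hgc1 : g.coeff (d - 1) = d * f.coeff d := by
    rw [hg, coeff_sub, hcd1]; ring
  have hgne : g ≠ 0 := by
    intro h
    rw [h] at hgc1
    simp at hgc1
    rcases hgc1 with h | h
    · exact absurd h (by exact_mod_cast (by omega : d ≠ 0))
    · exact hlc h
  refine ⟨hgne, ?_⟩
  have hgcd : g.coeff d = 0 := by rw [hg, coeff_sub, hcd]; ring
  have hle : g.natDegree ≤ d := by
    calc g.natDegree ≤ max f.natDegree (taylor (-1 : ℂ) f).natDegree := natDegree_sub_le _ _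
    _ = d := by rw [natDegree_taylor]; omega
  rcases lt_or_eq_of_le hle with h | h
  · exact h
  · exact absurd (h ▸ hgcd) (coeff_ne_zero_of_eq_degree (by rw [degree_eq_natDegree hgne, h]))

private lemma key18 (S : Submodule ℂ ℂ[X]) :
    ∀ n (f : ℂ[X]), f.natDegree ≤ n → f ≠ 0 →
    (∀ i : ℤ, f.comp (X - C (i : ℂ)) ∈ S) → ∃ c : ℂ, c ≠ 0 ∧ C c ∈ S := by
  intro n
  induction n with
  | zero =>
    intro f h hf hS
    obtain ⟨a, ha⟩ := natDegree_eq_zero.mp (Nat.le_zero.mp h)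
    refine ⟨a, fun h0 => hf (by rw [← ha, h0, map_zero]), ?_⟩
    have := hS 0
    simpa [← ha] using this
  | succ n ih =>
    intro f h hf hS
    by_cases hd : f.natDegree = 0
    · obtain ⟨a, ha⟩ := natDegree_eq_zero.mp hd
      refine ⟨a, fun h0 => hf (by rw [← ha, h0, map_zero]), ?_⟩
      have := hS 0
      simpa [← ha] using this
    · obtain ⟨hgne, hglt⟩ := diff_step18 f (by omega)
      set g := f - taylor (-1) f with hg
      have htay : taylor (-1 : ℂ) f = f.comp (X - C 1) := by
        rw [taylor_apply]
        congr 1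
        rw [map_neg]
        ring
      have hshift : ∀ i : ℤ, g.comp (X - C (i : ℂ)) ∈ S := by
        intro i
        have hcomp : g.comp (X - C (i : ℂ)) =
            f.comp (X - C (i : ℂ)) - f.comp (X - C ((i + 1 : ℤ) : ℂ)) := by
          rw [hg, htay, sub_comp, comp_assoc]
          congr 2
          simp only [sub_comp, X_comp, C_comp]
          push_cast
          rw [map_add]
          ring
        rw [hcomp]
        exact Submodule.sub_mem S (hS i) (hS (i + 1))
      exact ih g (by omega) hgne hshift

/-- For `α = 0`, `Ω(λ, 0)` has exactly one nontrivial proper submodule, namely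
`t·ℂ[t]`, and the quotient is the one-dimensional trivial module. -/
theorem stmt18 (lam : ℂ) (hlam : lam ≠ 0)
    (L : ℤ → ℂ[X] → ℂ[X])
    (hL : ∀ (i : ℤ) (f : ℂ[X]), L i f = C (lam ^ i) * X * f.comp (X - C (i : ℂ)))
    (W : Submodule ℂ ℂ[X]) (hW : W = (Ideal.span {(X : ℂ[X])}).restrictScalars ℂ) :
    (∀ (i : ℤ) (f : ℂ[X]), f ∈ W → L i f ∈ W) ∧ W ≠ ⊥ ∧ W ≠ ⊤ ∧
    (∀ p : Submodule ℂ ℂ[X], (∀ (i : ℤ) (f : ℂ[X]), f ∈ p → L i f ∈ p) →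
      p = ⊥ ∨ p = W ∨ p = ⊤) ∧
    (∀ (i : ℤ) (f : ℂ[X]), L i f ∈ W) ∧
    (∀ f : ℂ[X], ∃ c : ℂ, f - C c ∈ W) := by
  have hWmem : ∀ f : ℂ[X], f ∈ W ↔ (X : ℂ[X]) ∣ f := by
    intro f
    rw [hW, Submodule.restrictScalars_mem, Ideal.mem_span_singleton]
  have hLW : ∀ (i : ℤ) (f : ℂ[X]), L i f ∈ W := by
    intro i f
    rw [hWmem, hL]
    exact ⟨C (lam ^ i) * f.comp (X - C (i : ℂ)), by ring⟩
  refine ⟨fun i f _ => hLW i f, ?_, ?_, ?_, hLW, ?_⟩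
  · -- W ≠ ⊥
    intro h
    have : (X : ℂ[X]) ∈ W := (hWmem X).mpr dvd_rfl
    rw [h, Submodule.mem_bot] at this
    exact X_ne_zero this
  · -- W ≠ ⊤
    intro h
    have : (1 : ℂ[X]) ∈ W := h ▸ Submodule.mem_top
    rw [hWmem, X_dvd_iff] at this
    simp at this
  · -- classification
    intro p hp
    by_cases hbot : p = ⊥
    · exact Or.inl hbot
    obtain ⟨f, hfp, hfne⟩ := Submodule.ne_bot_iff p |>.mp hbot
    -- step A: X * g.comp (X - C i) ∈ p for g ∈ p
    have stepA : ∀ g ∈ p, ∀ i : ℤ, X * g.comp (X - C (i : ℂ)) ∈ p := by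
      intro g hg i
      have h1 := hp i g hg
      rw [hL] at h1
      have h2 := p.smul_mem ((lam ^ i)⁻¹) h1
      have h3 : (lam ^ i)⁻¹ • (C (lam ^ i) * X * g.comp (X - C (i : ℂ)))
          = X * g.comp (X - C (i : ℂ)) := by
        rw [smul_eq_C_mul, ← mul_assoc, ← mul_assoc, ← C_mul,
          inv_mul_cancel₀ (zpow_ne_zero i hlam), C_1, one_mul]
      rwa [h3] at h2
    -- step B: X ∈ p
    have hXp : (X : ℂ[X]) ∈ p := by
      set S : Submodule ℂ ℂ[X] := p.comap (LinearMap.mulLeft ℂ (X : ℂ[X])) with hS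
      have hmemS : ∀ g : ℂ[X], g ∈ S ↔ X * g ∈ p := by
        intro g
        rw [hS, Submodule.mem_comap, LinearMap.mulLeft_apply]
      obtain ⟨c, hc0, hcS⟩ := key18 S f.natDegree f le_rfl hfne
        (fun i => (hmemS _).mpr (stepA f hfp i))
      rw [hmemS] at hcS
      have h4 : c⁻¹ • ((X : ℂ[X]) * C c) = X := by
        rw [smul_eq_C_mul, mul_comm (X : ℂ[X]) (C c), ← mul_assoc, ← C_mul,
          inv_mul_cancel₀ hc0, C_1, one_mul]
      have := p.smul_mem c⁻¹ hcS
      rwa [h4] at this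
    -- step C: closure under multiplication by X
    have stepC : ∀ g ∈ p, X * g ∈ p := by
      intro g hg
      have := stepA g hg 0
      simpa using this
    -- step D: all powers X^(n+1) ∈ p
    have stepD : ∀ n : ℕ, (X : ℂ[X]) ^ (n + 1) ∈ p := by
      intro n
      induction n with
      | zero => simpa using hXp
      | succ n ih =>
        have := stepC _ ih
        rwa [show (X : ℂ[X]) * X ^ (n + 1) = X ^ (n + 1 + 1) by ring] at this
    -- step E: X * r ∈ p for all r
    have stepE : ∀ r : ℂ[X], X * r ∈ p := by
      intro r
      induction r using Polynomial.induction_on' with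
      | add u v hu hv =>
        rw [mul_add]
        exact p.add_mem hu hv
      | monomial n a =>
        have heq : (X : ℂ[X]) * monomial n a = a • (X : ℂ[X]) ^ (n + 1) := by
          rw [smul_eq_C_mul, ← C_mul_X_pow_eq_monomial]
          ring
        rw [heq]
        exact p.smul_mem a (stepD n)
    -- step F: W ≤ p
    have stepF : W ≤ p := by
      intro w hw
      obtain ⟨r, hr⟩ := (hWmem w).mp hw
      rw [hr]
      exact stepE r
    by_cases hpW : p = W
    · exact Or.inr (Or.inl hpW)
    · right; right
      have : ∃ g ∈ p, g ∉ W := by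
        by_contra h
        push_neg at h
        exact hpW (le_antisymm h stepF)
      obtain ⟨g, hgp, hgW⟩ := this
      have hc0 : g.coeff 0 ≠ 0 := by
        intro h
        exact hgW ((hWmem g).mpr (X_dvd_iff.mpr h))
      have hgW2 : g - C (g.coeff 0) ∈ W := by
        rw [hWmem, X_dvd_iff]
        simp
      have hCc : C (g.coeff 0) ∈ p := by
        have := p.sub_mem hgp (stepF hgW2)
        simpa using this
      rw [eq_top_iff]
      intro q _
      have h1 : q - C (q.coeff 0) ∈ p := stepF (by rw [hWmem, X_dvd_iff]; simp)
      have h2 : C (q.coeff 0) ∈ p := by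
        have := p.smul_mem (q.coeff 0 * (g.coeff 0)⁻¹) hCc
        rw [smul_eq_C_mul, ← C_mul, mul_assoc,
          inv_mul_cancel₀ hc0, mul_one] at this
        exact this
      have := p.add_mem h1 h2
      simpa using this
  · -- quotient trivial
    intro f
    refine ⟨f.coeff 0, ?_⟩
    rw [hWmem, X_dvd_iff]
    simp
end
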